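/- arXiv:1010.0078 — 4 statements merged into one kernel-verified Lean document; each statement's English description precedes it below -/
import Mathlib

section
/- Let A: ℤ → ℂ be antisymmetric (A(m) = -A(-m)) and satisfy (n-m)A(k) + (m-k)A(n) + (k-n)A(m) = 0 whenever k+n+m = 0. Then A is completely determined by A(1) and A(2); i.e., the space of such functions A is at most 2-dimensional. -/
/-!
Taking `k = 1, m = -n - 1` in the functional equation and using antisymmetry gives the
recursion `(n - 1) A(n + 1) = (n + 2) A(n) - (2n + 1) A(1)`, which determines `A(n + 1)` from
`A(n)` and `A(1)` as soon as `n ≥ 2`. Hence `A` is determined on the positive integers by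
`A(1)` and `A(2)`, and on the rest of `ℤ` by antisymmetry. Since the conditions are linear in
`A`, it suffices to show that a solution vanishing at `1` and `2` vanishes identically.
-/

/-- The coefficients `A` of the Witt-algebra 2-cocycles `b(d_m, d_n) = A(m) δ_{m+n,0}`. -/
def wittCocycleCoeffs (R : Type*) [CommRing R] : Submodule R (ℤ → R) where
  carrier := {A | (∀ m, A m = -A (-m)) ∧
    ∀ k n m : ℤ, k + n + m = 0 → ((n : R) - m) * A k + ((m : R) - k) * A n + ((k : R) - n) * A m = 0}
  zero_mem' := by simp
  add_mem' := by
    rintro A B ⟨hAanti, hAcoc⟩ ⟨hBanti, hBcoc⟩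
    refine ⟨fun m => by simp [hAanti m, hBanti m, add_comm], fun k n m h => ?_⟩
    simp only [Pi.add_apply]
    linear_combination hAcoc k n m h + hBcoc k n m h
  smul_mem' := by
    rintro c A ⟨hanti, hcoc⟩
    refine ⟨fun m => by simp [hanti m], fun k n m h => ?_⟩
    simp only [Pi.smul_apply, smul_eq_mul]
    linear_combination c * hcoc k n m h

namespace wittCocycleCoeffs

variable {R : Type*} [CommRing R] {A : ℤ → R}

theorem recursion (hA : A ∈ wittCocycleCoeffs R) (n : ℤ) :
    ((n : R) - 1) * A (n + 1) = (n + 2) * A n - (2 * n + 1) * A 1 := by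
  obtain ⟨hanti, hcoc⟩ := hA
  have h := hcoc 1 n (-n - 1) (by ring)
  rw [show -n - 1 = -(n + 1) by ring, ← neg_eq_iff_eq_neg.mpr (hanti (n + 1))] at h
  push_cast at h
  linear_combination h

variable [IsDomain R] [CharZero R]

theorem apply_zero (hA : A ∈ wittCocycleCoeffs R) : A 0 = 0 := by
  have h := hA.1 0
  rw [neg_zero, eq_neg_iff_add_eq_zero, ← two_mul] at h
  exact (mul_eq_zero.mp h).resolve_left two_ne_zero

theorem eq_zero_of_apply_one_of_apply_two (hA : A ∈ wittCocycleCoeffs R)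
    (h1 : A 1 = 0) (h2 : A 2 = 0) : A = 0 := by
  have hpos : ∀ n : ℤ, 1 ≤ n → A n = 0 := by
    refine Int.leInduction h1 fun n hn ih => ?_
    rcases hn.eq_or_lt with rfl | hn
    · exact h2
    have hrec := recursion hA n
    rw [ih, h1, mul_zero, mul_zero, sub_zero] at hrec
    have hn1 : (n : R) - 1 ≠ 0 := by exact_mod_cast sub_ne_zero.mpr hn.ne'
    exact (mul_eq_zero.mp hrec).resolve_left hn1
  funext n
  rcases lt_trichotomy n 0 with hn | rfl | hn
  · rw [Pi.zero_apply, hA.1 n, hpos (-n) (by omega), neg_zero]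
  · exact apply_zero hA
  · exact hpos n hn

end wittCocycleCoeffs

/-- An antisymmetric solution `A` of the Witt-cocycle functional equation is
completely determined by `A 1` and `A 2`: two such solutions agreeing at `1` and `2`
are equal (so the space of such functions is at most 2-dimensional). -/
theorem stmt_1 (A B : ℤ → ℂ)
    (hAanti : ∀ m : ℤ, A m = -A (-m))
    (hBanti : ∀ m : ℤ, B m = -B (-m))
    (hAcoc : ∀ k n m : ℤ, k + n + m = 0 →
      ((n : ℂ) - (m : ℂ)) * A k + ((m : ℂ) - (k : ℂ)) * A n + ((k : ℂ) - (n : ℂ)) * A m = 0)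
    (hBcoc : ∀ k n m : ℤ, k + n + m = 0 →
      ((n : ℂ) - (m : ℂ)) * B k + ((m : ℂ) - (k : ℂ)) * B n + ((k : ℂ) - (n : ℂ)) * B m = 0)
    (h1 : A 1 = B 1) (h2 : A 2 = B 2) :
    A = B := by
  have hA : A ∈ wittCocycleCoeffs ℂ := ⟨hAanti, hAcoc⟩
  have hB : B ∈ wittCocycleCoeffs ℂ := ⟨hBanti, hBcoc⟩
  rw [← sub_eq_zero]
  exact wittCocycleCoeffs.eq_zero_of_apply_one_of_apply_two (sub_mem hA hB)
    (by simp [h1]) (by simp [h2])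
end

section
/- Let c ∈ ℂ and suppose C: (ℤ + 1/2) → ℂ satisfies (c/6)(n³ - n) + (s - n/2)·C(r) + (r - n/2)·C(s) = 0 whenever r + s + n = 0 with r, s ∈ ℤ + 1/2 and n ∈ ℤ. Then C(s) = (c/3)(s² - 1/4) for all s ∈ ℤ + 1/2. -/
/-- `q` is a half-odd-integer, i.e. an element of `ℤ + 1/2`. -/
def IsHalfOdd (q : ℚ) : Prop := ∃ k : ℤ, q = (k : ℚ) + 1/2

/-- Determination of the central term of the anticommutator in the Neveu-Schwarz
algebra: if `C` on `ℤ + 1/2` satisfies the Jacobi-derived relation with the Virasoro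
central term `(c/12)(n³-n)`, then `C s = (c/3)(s² - 1/4)`. -/
theorem stmt_2 (c : ℂ) (C : ℚ → ℂ)
    (hrel : ∀ (r s : ℚ) (n : ℤ), IsHalfOdd r → IsHalfOdd s → r + s + (n : ℚ) = 0 →
      (c / 6) * ((n : ℂ) ^ 3 - (n : ℂ)) + ((s : ℂ) - (n : ℂ) / 2) * C r
        + ((r : ℂ) - (n : ℂ) / 2) * C s = 0) :
    ∀ s : ℚ, IsHalfOdd s → C s = (c / 3) * ((s : ℂ) ^ 2 - 1/4) := by
  rintro s ⟨k, hk⟩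
  have h := hrel (-3 * s) s (2 * k + 1) ⟨-3 * k - 2, by rw [hk]; push_cast; ring⟩
    ⟨k, hk⟩ (by rw [hk]; push_cast; ring)
  have hn : ((2 * k + 1 : ℤ) : ℂ) = 2 * (s : ℂ) := by
    rw [hk]; push_cast; ring
  have hr : ((-3 * s : ℚ) : ℂ) = -3 * (s : ℂ) := by push_cast; ring
  rw [hn, hr] at h
  have hq : s ≠ 0 := by
    rw [hk]
    intro h0
    have h1 : (2 * k + 1 : ℚ) = 0 := by linarith
    have h2 : (2 * k + 1 : ℤ) = 0 := by exact_mod_cast h1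
    omega
  have hs0 : (4 : ℂ) * (s : ℂ) ≠ 0 := by
    simp [Rat.cast_ne_zero.mpr hq]
  have key : (4 * (s : ℂ)) * C s = (4 * (s : ℂ)) * ((c / 3) * ((s : ℂ) ^ 2 - 1/4)) := by
    linear_combination -h
  exact mul_left_cancel₀ hs0 key
end

section
/- If the Verma module V(c,h) for the Neveu-Schwarz algebra admits no ghost (i.e., (u,u) ≥ 0 for all u), then c ≥ 0 and h ≥ 0. -/
/-- `q` is an integer viewed in `ℚ`. -/
def IsInt (q : ℚ) : Prop := ∃ k : ℤ, q = (k : ℚ)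

/-- If the Verma module `V(c,h)` of the Neveu-Schwarz algebra (with its canonical
sesquilinear form, highest weight vector `Ω`, `L₀Ω = hΩ`, `CΩ = cΩ`, positive modes
annihilating `Ω`, adjoints `Lₙ* = L₋ₙ`, `Gₘ* = G₋ₘ`) admits no ghost, i.e. `(u,u) ≥ 0`
for all `u`, then `c ≥ 0` and `h ≥ 0`. -/
theorem stmt_4 {H : Type*} [AddCommGroup H] [Module ℂ H]
    (B : H →ₗ⋆[ℂ] H →ₗ[ℂ] ℂ)
    (L G : ℚ → Module.End ℂ H) (Ω : H) (c h : ℝ)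
    (hherm : ∀ x y : H, B x y = starRingEnd ℂ (B y x))
    (hΩ : B Ω Ω = 1)
    -- Neveu-Schwarz relations
    (hLL : ∀ m n : ℚ, IsInt m → IsInt n →
      L m * L n - L n * L m
        = (((m : ℂ) - (n : ℂ)) • L (m + n))
          + (if m + n = 0 then ((c : ℂ) / 12) * ((m : ℂ) ^ 3 - (m : ℂ)) else 0) • 1)
    (hGL : ∀ m n : ℚ, IsHalfOdd m → IsInt n →
      G m * L n - L n * G m = ((m : ℂ) - (n : ℂ) / 2) • G (m + n))
    (hGG : ∀ m n : ℚ, IsHalfOdd m → IsHalfOdd n →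
      G m * G n + G n * G m
        = ((2 : ℂ) • L (m + n))
          + (if m + n = 0 then ((c : ℂ) / 3) * ((m : ℂ) ^ 2 - 1/4) else 0) • 1)
    -- adjoints
    (hadjL : ∀ m : ℚ, IsInt m → ∀ x y : H, B (L m x) y = B x (L (-m) y))
    (hadjG : ∀ m : ℚ, IsHalfOdd m → ∀ x y : H, B (G m x) y = B x (G (-m) y))
    -- highest weight conditions
    (hL0 : L 0 Ω = (h : ℂ) • Ω)
    (hannL : ∀ m : ℚ, IsInt m → 0 < m → L m Ω = 0)
    (hannG : ∀ m : ℚ, IsHalfOdd m → 0 < m → G m Ω = 0)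
    -- no ghost
    (hpos : ∀ u : H, 0 ≤ (B u u).re) :
    0 ≤ c ∧ 0 ≤ h := by

  -- Key computation: for half-odd m > 0, ‖G₋ₘΩ‖² = 2h + (c/3)(m² - 1/4) ≥ 0.
  have key : ∀ m : ℚ, IsHalfOdd m → 0 < m →
      (0:ℝ) ≤ 2*h + (c/3)*((m:ℝ)^2 - 1/4) := by
    intro m hm hmpos
    have hmneg : IsHalfOdd (-m) := by
      obtain ⟨k, hk⟩ := hm
      exact ⟨-k - 1, by push_cast [hk]; ring⟩
    have hcomm := hGG m (-m) hm hmneg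
    rw [show m + -m = 0 by ring, if_pos rfl] at hcomm
    have happ := congrArg (fun T : Module.End ℂ H => T Ω) hcomm
    simp only [Module.End.mul_apply, LinearMap.add_apply, LinearMap.smul_apply,
      Module.End.one_apply, hannG m hm hmpos, map_zero, add_zero, hL0] at happ
    have hval : G m (G (-m) Ω)
        = ((2*(h:ℂ) + ((c:ℂ)/3) * ((m:ℂ)^2 - 1/4)) : ℂ) • Ω := by
      rw [happ, smul_smul, ← add_smul]
    have hBeq : B (G (-m) Ω) (G (-m) Ω)
        = ((2*(h:ℂ) + ((c:ℂ)/3) * ((m:ℂ)^2 - 1/4)) : ℂ) := by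
      have := hadjG (-m) hmneg Ω (G (-m) Ω)
      rw [neg_neg] at this
      rw [this, hval, map_smul, smul_eq_mul, hΩ, mul_one]
    have hre : (B (G (-m) Ω) (G (-m) Ω)).re
        = 2*h + (c/3)*((m:ℝ)^2 - 1/4) := by
      rw [hBeq]
      have : ((2*(h:ℂ) + ((c:ℂ)/3) * ((m:ℂ)^2 - 1/4)) : ℂ)
          = (((2*h + (c/3)*((m:ℝ)^2 - 1/4)) : ℝ) : ℂ) := by
        push_cast; ring
      rw [this, Complex.ofReal_re]
    rw [← hre]
    exact hpos _
  have hhalf : IsHalfOdd (1/2 : ℚ) := ⟨0, by norm_num⟩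
  have hh : 0 ≤ h := by
    have := key (1/2) hhalf (by norm_num)
    norm_num at this
    linarith
  refine ⟨?_, hh⟩
  by_contra hc
  push_neg at hc
  obtain ⟨n, hn⟩ := exists_nat_gt (6*h/(-c) + 1)
  have hmh : IsHalfOdd ((n : ℚ) + 1/2) := ⟨(n : ℤ), by push_cast; ring⟩
  have hkey := key ((n : ℚ) + 1/2) hmh (by positivity)
  have hcast : ((((n : ℚ) + 1/2 : ℚ)) : ℝ) = (n : ℝ) + 1/2 := by push_cast; ring
  rw [hcast] at hkey
  have hn' : (n : ℝ) > 6*h/(-c) + 1 := hn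
  have hcpos : (0:ℝ) < -c := by linarith
  have h1 : 6*h/(-c) < (n:ℝ) - 1 := by linarith
  have h2 : 6*h < ((n:ℝ) - 1) * (-c) := by
    rw [div_lt_iff₀ hcpos] at h1; linarith
  nlinarith [sq_nonneg ((n:ℝ)), hn', hcpos]
end

section
/- Let H carry representations of bosons B^a_n and fermions ψ^a_n acting irreducibly, with superconformal generators G_m satisfying [G_m, B^a_r] = -r·d^{1/2}ψ^a_{m+r} and [G_m, ψ^a_r]_+ = d^{-1/2}B^a_{m+r}, and Virasoro generators L_n satisfying [L_n, B^a_r] = -r B^a_{n+r} and [L_n, ψ^a_r] = -(r + n/2)ψ^a_{n+r}. Then [G_m, G_n]_+ - 2L_{m+n} commutes with all B^a_r and all ψ^a_r, hence by irreducibility is a scalar k_{m,n}·I. -/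
lemma halfodd_add_halfodd {x y : ℚ} (hx : IsHalfOdd x) (hy : IsHalfOdd y) : IsInt (x + y) := by
  obtain ⟨k, rfl⟩ := hx; obtain ⟨l, rfl⟩ := hy
  exact ⟨k + l + 1, by push_cast; ring⟩

lemma halfodd_add_int {x y : ℚ} (hx : IsHalfOdd x) (hy : IsInt y) : IsHalfOdd (x + y) := by
  obtain ⟨k, rfl⟩ := hx; obtain ⟨l, rfl⟩ := hy
  exact ⟨k + l, by push_cast; ring⟩

/-- If bosons `B^a_r` and fermions `ψ^a_r` act irreducibly and the superconformal and
Virasoro generators satisfy `[G_m, B^a_r] = -r√d ψ^a_{m+r}`, `[G_m, ψ^a_r]₊ = d^{-1/2} B^a_{m+r}`,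
`[L_n, B^a_r] = -r B^a_{n+r}`, `[L_n, ψ^a_r] = -(r + n/2) ψ^a_{n+r}`, then for all `m, n` the
operator `[G_m, G_n]₊ - 2L_{m+n}` commutes with all `B^a_r` and all `ψ^a_r`, hence (by
irreducibility and Schur's lemma) is a scalar `k_{m,n}·I`. -/
theorem stmt_18 {H : Type*} [AddCommGroup H] [Module ℂ H] {N : ℕ}
    (B ψ : Fin N → ℚ → Module.End ℂ H)
    (G : ℚ → Module.End ℂ H) (L : ℚ → Module.End ℂ H)
    (d : ℝ) (hd : 0 < d)
    (hGB : ∀ (m : ℚ) (a : Fin N) (r : ℚ), IsHalfOdd m → IsInt r →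
      G m * B a r - B a r * G m = (-(r : ℂ) * (Real.sqrt d : ℂ)) • ψ a (m + r))
    (hGψ : ∀ (m : ℚ) (a : Fin N) (r : ℚ), IsHalfOdd m → IsHalfOdd r →
      G m * ψ a r + ψ a r * G m = (((Real.sqrt d : ℝ) : ℂ))⁻¹ • B a (m + r))
    (hLB : ∀ (n : ℚ) (a : Fin N) (r : ℚ), IsInt n → IsInt r →
      L n * B a r - B a r * L n = (-(r : ℂ)) • B a (n + r))
    (hLψ : ∀ (n : ℚ) (a : Fin N) (r : ℚ), IsInt n → IsHalfOdd r →
      L n * ψ a r - ψ a r * L n = (-((r : ℂ) + (n : ℂ) / 2)) • ψ a (n + r))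
    (hSchur : ∀ T : Module.End ℂ H,
      (∀ (a : Fin N) (r : ℚ), IsInt r → T * B a r = B a r * T) →
      (∀ (a : Fin N) (r : ℚ), IsHalfOdd r → T * ψ a r = ψ a r * T) →
      ∃ k : ℂ, T = k • (1 : Module.End ℂ H)) :
    ∀ m n : ℚ, IsHalfOdd m → IsHalfOdd n →
      (∀ (a : Fin N) (r : ℚ), IsInt r →
        (G m * G n + G n * G m - (2 : ℂ) • L (m + n)) * B a r
          = B a r * (G m * G n + G n * G m - (2 : ℂ) • L (m + n))) ∧
      (∀ (a : Fin N) (r : ℚ), IsHalfOdd r →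
        (G m * G n + G n * G m - (2 : ℂ) • L (m + n)) * ψ a r
          = ψ a r * (G m * G n + G n * G m - (2 : ℂ) • L (m + n))) ∧
      ∃ k : ℂ, G m * G n + G n * G m - (2 : ℂ) • L (m + n) = k • (1 : Module.End ℂ H) := by
  intro m n hm hn
  set s : ℂ := ((Real.sqrt d : ℝ) : ℂ) with hs_def
  have hs : s ≠ 0 := by
    simp only [hs_def, Complex.ofReal_ne_zero]
    exact ne_of_gt (Real.sqrt_pos.mpr hd)
  have hmn : IsInt (m + n) := halfodd_add_halfodd hm hn
  have hBcomm : ∀ (a : Fin N) (r : ℚ), IsInt r →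
      (G m * G n + G n * G m - (2 : ℂ) • L (m + n)) * B a r
        = B a r * (G m * G n + G n * G m - (2 : ℂ) • L (m + n)) := by
    intro a r hr
    set X := G m; set Y := G n; set b := B a r
    set p1 := ψ a (m + r); set p2 := ψ a (n + r); set b' := B a (m + n + r)
    have h1 : X * b - b * X = (-(r : ℂ) * s) • p1 := hGB m a r hm hr
    have h2 : Y * b - b * Y = (-(r : ℂ) * s) • p2 := hGB n a r hn hr
    have h3 : X * p2 + p2 * X = s⁻¹ • b' := by
      have := hGψ m a (n + r) hm (halfodd_add_int hn hr)
      rwa [show m + (n + r) = m + n + r by ring] at this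
    have h4 : Y * p1 + p1 * Y = s⁻¹ • b' := by
      have := hGψ n a (m + r) hn (halfodd_add_int hm hr)
      rwa [show n + (m + r) = m + n + r by ring] at this
    have h5 : L (m + n) * b - b * L (m + n) = (-(r : ℂ)) • b' := hLB (m + n) a r hmn hr
    have e1 : X * Y * b - b * (X * Y) = (-(r : ℂ) * s) • (X * p2) + (-(r : ℂ) * s) • (p1 * Y) := by
      have h : X * Y * b - b * (X * Y) = X * (Y * b - b * Y) + (X * b - b * X) * Y := by
        noncomm_ring
      rw [h, h1, h2, mul_smul_comm, smul_mul_assoc]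
    have e2 : Y * X * b - b * (Y * X) = (-(r : ℂ) * s) • (Y * p1) + (-(r : ℂ) * s) • (p2 * X) := by
      have h : Y * X * b - b * (Y * X) = Y * (X * b - b * X) + (Y * b - b * Y) * X := by
        noncomm_ring
      rw [h, h1, h2, mul_smul_comm, smul_mul_assoc]
    have h3' : X * p2 = s⁻¹ • b' - p2 * X := eq_sub_of_add_eq h3
    have h4' : Y * p1 = s⁻¹ • b' - p1 * Y := eq_sub_of_add_eq h4
    have key : (X * Y + Y * X - (2 : ℂ) • L (m + n)) * b
        - b * (X * Y + Y * X - (2 : ℂ) • L (m + n))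
        = (X * Y * b - b * (X * Y)) + (Y * X * b - b * (Y * X))
          - (2 : ℂ) • (L (m + n) * b - b * L (m + n)) := by
      simp only [sub_mul, add_mul, mul_sub, mul_add, smul_mul_assoc, mul_smul_comm, smul_sub]
      abel
    rw [e1, e2, h5, h3', h4'] at key
    rw [← sub_eq_zero, key]
    match_scalars <;> field_simp <;> ring
  have hψcomm : ∀ (a : Fin N) (r : ℚ), IsHalfOdd r →
      (G m * G n + G n * G m - (2 : ℂ) • L (m + n)) * ψ a r
        = ψ a r * (G m * G n + G n * G m - (2 : ℂ) • L (m + n)) := by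
    intro a r hr
    set X := G m; set Y := G n; set p := ψ a r
    set b1 := B a (m + r); set b2 := B a (n + r); set p' := ψ a (m + n + r)
    have h1 : X * p + p * X = s⁻¹ • b1 := hGψ m a r hm hr
    have h2 : Y * p + p * Y = s⁻¹ • b2 := hGψ n a r hn hr
    have h3 : X * b2 - b2 * X = (-((n : ℂ) + (r : ℂ)) * s) • p' := by
      have := hGB m a (n + r) hm (halfodd_add_halfodd hn hr)
      rwa [show m + (n + r) = m + n + r by ring, Rat.cast_add] at this
    have h4 : Y * b1 - b1 * Y = (-((m : ℂ) + (r : ℂ)) * s) • p' := by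
      have := hGB n a (m + r) hn (halfodd_add_halfodd hm hr)
      rwa [show n + (m + r) = m + n + r by ring, Rat.cast_add] at this
    have h5 : L (m + n) * p - p * L (m + n)
        = (-((r : ℂ) + ((m : ℚ) + (n : ℚ) : ℚ) / 2)) • p' := by
      have := hLψ (m + n) a r hmn hr
      rwa [show (m + n) + r = m + n + r by ring] at this
    have e1 : X * Y * p - p * (X * Y) = s⁻¹ • (X * b2) - s⁻¹ • (b1 * Y) := by
      have h : X * Y * p - p * (X * Y) = X * (Y * p + p * Y) - (X * p + p * X) * Y := by
        noncomm_ring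
      rw [h, h1, h2, mul_smul_comm, smul_mul_assoc]
    have e2 : Y * X * p - p * (Y * X) = s⁻¹ • (Y * b1) - s⁻¹ • (b2 * X) := by
      have h : Y * X * p - p * (Y * X) = Y * (X * p + p * X) - (Y * p + p * Y) * X := by
        noncomm_ring
      rw [h, h1, h2, mul_smul_comm, smul_mul_assoc]
    have h3' : X * b2 = (-((n : ℂ) + (r : ℂ)) * s) • p' + b2 * X := by
      rw [← h3]; abel
    have h4' : Y * b1 = (-((m : ℂ) + (r : ℂ)) * s) • p' + b1 * Y := by
      rw [← h4]; abel
    have key : (X * Y + Y * X - (2 : ℂ) • L (m + n)) * p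
        - p * (X * Y + Y * X - (2 : ℂ) • L (m + n))
        = (X * Y * p - p * (X * Y)) + (Y * X * p - p * (Y * X))
          - (2 : ℂ) • (L (m + n) * p - p * L (m + n)) := by
      simp only [sub_mul, add_mul, mul_sub, mul_add, smul_mul_assoc, mul_smul_comm, smul_sub]
      abel
    rw [e1, e2, h5, h3', h4'] at key
    rw [← sub_eq_zero, key]
    match_scalars <;> push_cast <;> field_simp <;> ring
  exact ⟨hBcomm, hψcomm,
    hSchur _ (fun a r hr => hBcomm a r hr) (fun a r hr => hψcomm a r hr)⟩
end
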